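/- Let u_T : ℝⁿ → ℝ be Lipschitz. If there exists a Lipschitz function u0 : ℝⁿ → ℝ with S_T^+ u0 = u_T, then for every T' with 0 < T' ≤ T there exists a Lipschitz function u0' : ℝⁿ → ℝ with S_{T'}^+ u0' = u_T; that is, the set of reachable targets becomes smaller as the time horizon increases. -/

import Mathlib

open scoped RealInnerProductSpace
open Filter

noncomputable section

/-- `n`-dimensional Euclidean space. -/
abbrev Euc (n : ℕ) := EuclideanSpace ℝ (Fin n)

/-- A real-valued function on `ℝⁿ` is Lipschitz (with some constant). -/
def IsLip {n : ℕ} (f : Euc n → ℝ) : Prop := ∃ K : NNReal, LipschitzWith K f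

/-- The quadratic form `q ↦ ⟨M q, q⟩` associated to a matrix `M`. -/
def quadA {n : ℕ} (M : Matrix (Fin n) (Fin n) ℝ) (q : Euc n) : ℝ :=
  ⟪(Matrix.toEuclideanLin M) q, q⟫

/-- The forward Hopf–Lax operator for the quadratic Hamiltonian `H(p) = ⟨A p, p⟩/2`:
`(S_T^+ g)(x) = inf_y [g(y) + ⟨A⁻¹(x-y), x-y⟩/(2T)]`. -/
def SplusQ {n : ℕ} (T : ℝ) (A : Matrix (Fin n) (Fin n) ℝ) (g : Euc n → ℝ) (x : Euc n) : ℝ :=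
  ⨅ y : Euc n, (g y + quadA A⁻¹ (x - y) / (2 * T))

/-- The backward operator for the quadratic Hamiltonian:
`(S_T^- g)(x) = sup_y [g(y) - ⟨A⁻¹(y-x), y-x⟩/(2T)]`. -/
def SminusQ {n : ℕ} (T : ℝ) (A : Matrix (Fin n) (Fin n) ℝ) (g : Euc n → ℝ) (x : Euc n) : ℝ :=
  ⨆ y : Euc n, (g y - quadA A⁻¹ (y - x) / (2 * T))

/-!
The forward Hopf–Lax operators form a semigroup, `S_t⁺ ∘ S_s⁺ = S_{s+t}⁺`, and `S_s⁺` maps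
`K`-Lipschitz functions to `K`-Lipschitz functions. Hence if `u_T = S_T⁺ u₀` and `T' < T`, then
`u_T = S_{T'}⁺ (S_{T-T'}⁺ u₀)`. The semigroup law reduces to an inf-convolution identity for the
cost `q(w)/(2t)`, `q = ⟨A⁻¹ ·, ·⟩`: by convexity and 2-homogeneity of `q`,
`q(u + v)/(2(s + t)) ≤ q(u)/(2s) + q(v)/(2t)`, with equality when `u : v = s : t`.
Coercivity of `q` keeps all infima finite.
-/

open Set

section Coercivity

variable {E : Type*} [NormedAddCommGroup E] [NormedSpace ℝ E]

theorem exists_pos_mul_sq_norm_le [FiniteDimensional ℝ E] {q : E → ℝ} (hq : Continuous q)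
    (hpos : ∀ w ≠ 0, 0 < q w) (hsmul : ∀ (a : ℝ) w, q (a • w) = a ^ 2 * q w) :
    ∃ c > 0, ∀ w, c * ‖w‖ ^ 2 ≤ q w := by
  have hzero : q 0 = 0 := by simpa using hsmul 0 0
  rcases subsingleton_or_nontrivial E with hE | hE
  · exact ⟨1, one_pos, fun w => by simp [Subsingleton.elim w 0, hzero]⟩
  obtain ⟨w₀, hw₀, hmin⟩ := (isCompact_sphere (0 : E) 1).exists_isMinOn
    (NormedSpace.sphere_nonempty.mpr zero_le_one) hq.continuousOn
  refine ⟨q w₀, hpos w₀ (ne_zero_of_mem_unit_sphere ⟨w₀, hw₀⟩), fun w => ?_⟩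
  rcases eq_or_ne w 0 with rfl | hw
  · simp [hzero]
  have hnorm : 0 < ‖w‖ := norm_pos_iff.mpr hw
  have hmem : ‖w‖⁻¹ • w ∈ Metric.sphere (0 : E) 1 := by
    simp [norm_smul, hnorm.ne']
  calc q w₀ * ‖w‖ ^ 2 ≤ q (‖w‖⁻¹ • w) * ‖w‖ ^ 2 := by gcongr; exact hmin hmem
    _ = q w := by rw [hsmul]; field_simp

end Coercivity

section HopfLax

variable {E : Type*} [NormedAddCommGroup E]

def hopfLax (q : E → ℝ) (t : ℝ) (g : E → ℝ) (x : E) : ℝ :=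
  ⨅ y, g y + q (x - y) / (2 * t)

variable {q g : E → ℝ} {K : NNReal} {s t : ℝ}

theorem bddBelow_hopfLax_integrand (hcoer : ∃ c > 0, ∀ w, c * ‖w‖ ^ 2 ≤ q w)
    (hg : LipschitzWith K g) (ht : 0 < t) (x : E) :
    BddBelow (range fun y => g y + q (x - y) / (2 * t)) := by
  obtain ⟨c, hc, hcq⟩ := hcoer
  refine ⟨g x - K ^ 2 * t / (2 * c), forall_mem_range.mpr fun y => ?_⟩
  have hlip : g x ≤ g y + K * ‖x - y‖ := by
    simpa [dist_eq_norm] using hg.le_add_mul x y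
  -- AM-GM: the linear loss allowed by `hg` is absorbed by the quadratic cost.
  have hamgm : K * ‖x - y‖ ≤ K ^ 2 * t / (2 * c) + c * ‖x - y‖ ^ 2 / (2 * t) := by
    rw [div_add_div _ _ (by positivity) (by positivity), le_div_iff₀ (by positivity)]
    nlinarith [sq_nonneg (c * ‖x - y‖ - K * t)]
  have hcost : c * ‖x - y‖ ^ 2 / (2 * t) ≤ q (x - y) / (2 * t) := by
    gcongr
    exact hcq _
  linarith

theorem lipschitzWith_hopfLax (hcoer : ∃ c > 0, ∀ w, c * ‖w‖ ^ 2 ≤ q w)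
    (hg : LipschitzWith K g) (ht : 0 < t) : LipschitzWith K (hopfLax q t g) := by
  refine LipschitzWith.of_le_add_mul K fun a b => ?_
  rw [← sub_le_iff_le_add]
  refine le_ciInf fun z => ?_
  have hshift : hopfLax q t g a ≤ g (z + (a - b)) + q (b - z) / (2 * t) := by
    have h := ciInf_le (bddBelow_hopfLax_integrand hcoer hg ht a) (z + (a - b))
    rwa [show a - (z + (a - b)) = b - z by abel] at h
  have hlip : g (z + (a - b)) ≤ g z + K * dist a b := by
    simpa [dist_eq_norm] using hg.le_add_mul (z + (a - b)) z
  linarith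

theorem ConvexOn.map_add_div_le [NormedSpace ℝ E] (hconv : ConvexOn ℝ univ q)
    (hsmul : ∀ (a : ℝ) w, q (a • w) = a ^ 2 * q w) (hs : 0 < s) (ht : 0 < t) (u v : E) :
    q (u + v) / (2 * (s + t)) ≤ q u / (2 * s) + q v / (2 * t) := by
  have hst : 0 < s + t := add_pos hs ht
  have key := hconv.2 (mem_univ (((s + t) / s) • u)) (mem_univ (((s + t) / t) • v))
    (div_pos hs hst).le (div_pos ht hst).le (by field_simp)
  have hu : (s / (s + t)) • (((s + t) / s) • u) = u := by
    rw [smul_smul, show s / (s + t) * ((s + t) / s) = 1 by field_simp, one_smul]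
  have hv : (t / (s + t)) • (((s + t) / t) • v) = v := by
    rw [smul_smul, show t / (s + t) * ((s + t) / t) = 1 by field_simp, one_smul]
  rw [hu, hv, hsmul, hsmul, smul_eq_mul, smul_eq_mul] at key
  calc q (u + v) / (2 * (s + t))
      ≤ (s / (s + t) * (((s + t) / s) ^ 2 * q u) + t / (s + t) * (((s + t) / t) ^ 2 * q v))
        / (2 * (s + t)) := by gcongr
    _ = q u / (2 * s) + q v / (2 * t) := by field_simp

theorem hopfLax_hopfLax [NormedSpace ℝ E] (hconv : ConvexOn ℝ univ q)
    (hsmul : ∀ (a : ℝ) w, q (a • w) = a ^ 2 * q w) (hcoer : ∃ c > 0, ∀ w, c * ‖w‖ ^ 2 ≤ q w)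
    (hg : LipschitzWith K g) (hs : 0 < s) (ht : 0 < t) :
    hopfLax q t (hopfLax q s g) = hopfLax q (s + t) g := by
  funext x
  have hst : 0 < s + t := add_pos hs ht
  apply le_antisymm
  · refine le_ciInf fun z => ?_
    -- the optimal intermediate point divides the segment from `z` to `x` in the ratio `s : t`
    set y := z + (s / (s + t)) • (x - z)
    have hyz : y - z = (s / (s + t)) • (x - z) := by simp [y]
    have hxy : x - y = (t / (s + t)) • (x - z) := by
      rw [show x - y = (1 - s / (s + t)) • (x - z) by simp only [y, sub_smul, one_smul]; abel]
      congr 1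
      field_simp
      ring
    calc hopfLax q t (hopfLax q s g) x ≤ hopfLax q s g y + q (x - y) / (2 * t) :=
          ciInf_le (bddBelow_hopfLax_integrand hcoer (lipschitzWith_hopfLax hcoer hg hs) ht x) y
      _ ≤ g z + q (y - z) / (2 * s) + q (x - y) / (2 * t) := by
          gcongr
          exact ciInf_le (bddBelow_hopfLax_integrand hcoer hg hs y) z
      _ = g z + q (x - z) / (2 * (s + t)) := by
          rw [hyz, hxy, hsmul, hsmul]
          field_simp
          ring
  · refine le_ciInf fun y => ?_
    rw [← sub_le_iff_le_add]
    refine le_ciInf fun z => ?_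
    have h₁ : hopfLax q (s + t) g x ≤ g z + q (x - z) / (2 * (s + t)) :=
      ciInf_le (bddBelow_hopfLax_integrand hcoer hg hst x) z
    have h₂ := hconv.map_add_div_le hsmul hs ht (y - z) (x - y)
    rw [sub_add_sub_cancel'] at h₂
    linarith

end HopfLax

section QuadraticForm

variable {F : Type*} [NormedAddCommGroup F] [InnerProductSpace ℝ F]

theorem inner_map_smul_self (T : F →ₗ[ℝ] F) (a : ℝ) (w : F) :
    ⟪T (a • w), a • w⟫ = a ^ 2 * ⟪T w, w⟫ := by
  simp only [map_smul, inner_smul_left, inner_smul_right, conj_trivial]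
  ring

theorem convexOn_inner_map_self {T : F →ₗ[ℝ] F} (hT : T.IsPositive) :
    ConvexOn ℝ univ fun w => ⟪T w, w⟫ := by
  refine ⟨convex_univ, fun x _ y _ a b ha hb hab => ?_⟩
  obtain rfl : b = 1 - a := by linarith
  have hsymm : ⟪T y, x⟫ = ⟪T x, y⟫ := by rw [hT.isSymmetric, real_inner_comm]
  have hdiff := hT.inner_nonneg_left (x - y)
  simp only [map_add, map_sub, map_smul, inner_add_left, inner_add_right, inner_sub_left,
    inner_sub_right, inner_smul_left, inner_smul_right, conj_trivial, smul_eq_mul,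
    hsymm] at hdiff ⊢
  nlinarith [mul_nonneg (mul_nonneg ha hb) hdiff]

end QuadraticForm

section Matrix

variable {n : ℕ} {M : Matrix (Fin n) (Fin n) ℝ}

theorem quadA_smul (M : Matrix (Fin n) (Fin n) ℝ) (a : ℝ) (w : Euc n) :
    quadA M (a • w) = a ^ 2 * quadA M w :=
  inner_map_smul_self _ a w

theorem convexOn_quadA (hM : M.PosSemidef) : ConvexOn ℝ univ (quadA M) :=
  convexOn_inner_map_self (Matrix.isPositive_toEuclideanLin_iff.mpr hM)

theorem continuous_quadA (M : Matrix (Fin n) (Fin n) ℝ) : Continuous (quadA M) :=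
  (Matrix.toEuclideanLin M).continuous_of_finiteDimensional.inner continuous_id

theorem quadA_pos (hM : M.PosDef) {w : Euc n} (hw : w ≠ 0) : 0 < quadA M w := by
  have h := hM.dotProduct_mulVec_pos (x := WithLp.ofLp w) (by simpa using hw)
  simpa [quadA, EuclideanSpace.inner_eq_star_dotProduct, dotProduct_comm] using h

theorem exists_pos_mul_sq_norm_le_quadA (hM : M.PosDef) :
    ∃ c > 0, ∀ w, c * ‖w‖ ^ 2 ≤ quadA M w :=
  exists_pos_mul_sq_norm_le (continuous_quadA M) (fun _ => quadA_pos hM) (quadA_smul M)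

theorem SplusQ_eq_hopfLax (T : ℝ) (A : Matrix (Fin n) (Fin n) ℝ) :
    SplusQ T A = hopfLax (quadA A⁻¹) T :=
  rfl

end Matrix

theorem reachable_mono_in_time_general
    {n : ℕ} (T : ℝ)
    (A : Matrix (Fin n) (Fin n) ℝ) (hA : A.PosDef)
    (uT : Euc n → ℝ)
    (hreach : ∃ u0 : Euc n → ℝ, IsLip u0 ∧ SplusQ T A u0 = uT) :
    ∀ T' : ℝ, 0 < T' → T' ≤ T →
      ∃ u0' : Euc n → ℝ, IsLip u0' ∧ SplusQ T' A u0' = uT := by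
  intro T' hT' hle
  obtain ⟨u0, ⟨K, hK⟩, rfl⟩ := hreach
  rcases hle.eq_or_lt with rfl | hlt
  · exact ⟨u0, ⟨K, hK⟩, rfl⟩
  have hs : 0 < T - T' := sub_pos.mpr hlt
  have hcoer := exists_pos_mul_sq_norm_le_quadA hA.inv
  simp only [SplusQ_eq_hopfLax]
  refine ⟨hopfLax (quadA A⁻¹) (T - T') u0, ⟨K, lipschitzWith_hopfLax hcoer hK hs⟩, ?_⟩
  rw [hopfLax_hopfLax (convexOn_quadA hA.inv.posSemidef) (quadA_smul A⁻¹) hcoer hK hs hT',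
    sub_add_cancel]

/-- If `u_T` is reachable in time `T`, then it is reachable in any time
`T'` with `0 < T' ≤ T`: the set of reachable targets shrinks as the horizon grows. -/
theorem reachable_mono_in_time
    {n : ℕ} (hn : 0 < n) (T : ℝ) (hT : 0 < T)
    (A : Matrix (Fin n) (Fin n) ℝ) (hA : A.PosDef)
    (uT : Euc n → ℝ) (huT : IsLip uT)
    (hreach : ∃ u0 : Euc n → ℝ, IsLip u0 ∧ SplusQ T A u0 = uT) :
    ∀ T' : ℝ, 0 < T' → T' ≤ T →
      ∃ u0' : Euc n → ℝ, IsLip u0' ∧ SplusQ T' A u0' = uT :=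
  reachable_mono_in_time_general T A hA uT hreach
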